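/- Under the assumptions of the mean-field theorem (finite measure r, moment condition ∫ κ dr < ∞), any two solutions (μ_t), (ν_t) of the mean-field equation dμ_t/dt = |r| (T(μ_t) - μ_t) satisfy ‖μ_t - ν_t‖ ≤ e^{Lt} ‖μ_0 - ν_0‖ for all t ≥ 0, where L = ∫ r(dω)(κ(ω) + 1). In particular, solutions to the mean-field equation are unique given the initial state. -/

import Mathlib

open MeasureTheory

/-- The total variation distance `‖μ - ν‖ = sup_A |μ(A) - ν(A)|`. -/
noncomputable def tvDist {S : Type*} [MeasurableSpace S] (μ ν : Measure S) : ℝ :=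
  sSup {c | ∃ A : Set S, MeasurableSet A ∧ c = |(μ A).toReal - (ν A).toReal|}

/-- The RDE operator: law of `γ[ω](X_1, X_2, …)` with `ω ~ |r|⁻¹ r` and `X_i` i.i.d. `μ`. -/
noncomputable def rdeT {Ω S : Type*} [MeasurableSpace Ω] [MeasurableSpace S] [Nonempty S]
    (r : Measure Ω) (γ : Ω → (ℕ → S) → S) (κ : Ω → ℕ) (μ : Measure S) : Measure S :=
  ((r Set.univ)⁻¹ • r).bind fun ω =>
    Measure.map
      (fun v : Fin (κ ω) → S =>
        γ ω (fun i => if h : i < κ ω then v ⟨i, h⟩ else Classical.arbitrary S))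
      (Measure.pi fun _ : Fin (κ ω) => μ)

/-- A family `(μ_t)_{t ≥ 0}` of probability measures solves the mean-field equation
`dμ_t/dt = |r| (T(μ_t) - μ_t)`, interpreted weakly against bounded measurable functions. -/
def SolvesMeanField {Ω S : Type*} [MeasurableSpace Ω] [MeasurableSpace S] [Nonempty S]
    (r : Measure Ω) (γ : Ω → (ℕ → S) → S) (κ : Ω → ℕ) (μ : ℝ → Measure S) : Prop :=
  (∀ t : ℝ, 0 ≤ t → IsProbabilityMeasure (μ t)) ∧
  ∀ φ : S → ℝ, Measurable φ → (∃ C, ∀ x, |φ x| ≤ C) →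
    ∀ t : ℝ, 0 ≤ t →
      HasDerivAt (fun s => ∫ x, φ x ∂(μ s))
        ((r Set.univ).toReal *
          ((∫ x, φ x ∂(rdeT r γ κ (μ t))) - ∫ x, φ x ∂(μ t))) t

/-!
The total variation distance `g t = ‖μ_t - ν_t‖` is controlled set by set: for a measurable `A`,
`t ↦ μ_t(A) - ν_t(A)` has derivative `|r| ((Tμ_t - μ_t)(A) - (Tν_t - ν_t)(A))`, which is bounded by
`(∫ κ dr + |r|) g t = L g t` since `T` is `|r|⁻¹ ∫ κ dr`-Lipschitz for the total variation distance:
`Tμ` mixes, over `ω`, images of the product measures `μ^{κ ω}`, and `‖μ^n - ν^n‖ ≤ n ‖μ - ν‖` by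
changing one coordinate at a time. As a supremum, `g` need not be differentiable, so the bound is
integrated set by set to `g t ≤ g 0 + L ∫₀ᵗ g`, and Grönwall's inequality gives `g t ≤ e^{L t} g 0`.
-/

open Set

section TotalVariation

variable {S T : Type*} [MeasurableSpace S] [MeasurableSpace T]

lemma bddAbove_tvDist_set (μ ν : Measure S) [IsFiniteMeasure μ] [IsFiniteMeasure ν] :
    BddAbove {c | ∃ A : Set S, MeasurableSet A ∧ c = |(μ A).toReal - (ν A).toReal|} := by
  refine ⟨μ.real univ + ν.real univ, ?_⟩
  rintro c ⟨A, -, rfl⟩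
  change |μ.real A - ν.real A| ≤ _
  have hμ : μ.real A ≤ μ.real univ := measureReal_mono (subset_univ A)
  have hν : ν.real A ≤ ν.real univ := measureReal_mono (subset_univ A)
  rw [abs_sub_le_iff]
  constructor <;> linarith [measureReal_nonneg (μ := μ) (s := A),
    measureReal_nonneg (μ := ν) (s := A)]

lemma abs_measureReal_sub_le_tvDist (μ ν : Measure S) [IsFiniteMeasure μ] [IsFiniteMeasure ν]
    {A : Set S} (hA : MeasurableSet A) : |μ.real A - ν.real A| ≤ tvDist μ ν :=
  le_csSup (bddAbove_tvDist_set μ ν) ⟨A, hA, rfl⟩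

lemma tvDist_nonneg (μ ν : Measure S) [IsFiniteMeasure μ] [IsFiniteMeasure ν] :
    0 ≤ tvDist μ ν := by
  simpa using abs_measureReal_sub_le_tvDist μ ν MeasurableSet.empty

lemma tvDist_le_of_forall {μ ν : Measure S} {d : ℝ}
    (h : ∀ A, MeasurableSet A → |μ.real A - ν.real A| ≤ d) : tvDist μ ν ≤ d :=
  csSup_le ⟨_, ∅, MeasurableSet.empty, rfl⟩ (by rintro c ⟨A, hA, rfl⟩; exact h A hA)

lemma tvDist_le_one (μ ν : Measure S) [IsProbabilityMeasure μ] [IsProbabilityMeasure ν] :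
    tvDist μ ν ≤ 1 :=
  tvDist_le_of_forall fun _ _ => abs_sub_le_of_nonneg_of_le measureReal_nonneg
    measureReal_le_one measureReal_nonneg measureReal_le_one

lemma tvDist_eq_zero_iff {μ ν : Measure S} [IsFiniteMeasure μ] [IsFiniteMeasure ν] :
    tvDist μ ν = 0 ↔ μ = ν := by
  refine ⟨fun h => Measure.ext fun A hA => ?_, ?_⟩
  · have := abs_measureReal_sub_le_tvDist μ ν hA
    rw [h] at this
    exact (measureReal_eq_measureReal_iff).1 (sub_eq_zero.1 (abs_nonpos_iff.1 this))
  · rintro rfl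
    exact le_antisymm (tvDist_le_of_forall fun A _ => by simp) (tvDist_nonneg μ μ)

@[simp]
lemma tvDist_self (μ : Measure S) [IsFiniteMeasure μ] : tvDist μ μ = 0 :=
  tvDist_eq_zero_iff.2 rfl

lemma tvDist_triangle (μ ν ρ : Measure S) [IsFiniteMeasure μ] [IsFiniteMeasure ν]
    [IsFiniteMeasure ρ] : tvDist μ ρ ≤ tvDist μ ν + tvDist ν ρ :=
  tvDist_le_of_forall fun A hA => (abs_sub_le _ (ν.real A) _).trans <|
    add_le_add (abs_measureReal_sub_le_tvDist μ ν hA) (abs_measureReal_sub_le_tvDist ν ρ hA)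

lemma tvDist_map_le (μ ν : Measure S) [IsFiniteMeasure μ] [IsFiniteMeasure ν] {f : S → T}
    (hf : Measurable f) : tvDist (μ.map f) (ν.map f) ≤ tvDist μ ν :=
  tvDist_le_of_forall fun A hA => by
    simpa only [map_measureReal_apply hf hA] using abs_measureReal_sub_le_tvDist μ ν (hf hA)

end TotalVariation

section Product

variable {S T : Type*} [MeasurableSpace S] [MeasurableSpace T]

lemma abs_integral_sub_integral_le {μ : Measure S} [IsProbabilityMeasure μ] {f g : S → ℝ}
    (hf : Integrable f μ) (hg : Integrable g μ) {d : ℝ} (h : ∀ x, |f x - g x| ≤ d) :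
    |∫ x, f x ∂μ - ∫ x, g x ∂μ| ≤ d := by
  rw [← integral_sub hf hg]
  simpa using norm_integral_le_of_norm_le_const (μ := μ)
    (.of_forall fun x => (Real.norm_eq_abs _).trans_le (h x))

lemma measureReal_prod_eq_integral (μ : Measure S) (P : Measure T)
    [IsFiniteMeasure P] {C : Set (S × T)} (hC : MeasurableSet C) :
    (μ.prod P).real C = ∫ x, P.real (Prod.mk x ⁻¹' C) ∂μ := by
  rw [measureReal_def, Measure.prod_apply hC, ← integral_toReal
    (measurable_measure_prodMk_left hC).aemeasurable (.of_forall fun _ => measure_lt_top _ _)]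
  rfl

lemma integrable_measureReal_prodMk (μ : Measure S) [IsFiniteMeasure μ] (P : Measure T)
    [IsFiniteMeasure P] {C : Set (S × T)} (hC : MeasurableSet C) :
    Integrable (fun x => P.real (Prod.mk x ⁻¹' C)) μ :=
  .of_bound (measurable_measure_prodMk_left hC).ennreal_toReal.aestronglyMeasurable
    (P.real univ) (.of_forall fun _ => by
      rw [Real.norm_of_nonneg measureReal_nonneg]; exact measureReal_mono (subset_univ _))

lemma tvDist_prod_left_le (μ : Measure S) [IsProbabilityMeasure μ] (P Q : Measure T)
    [IsFiniteMeasure P] [IsFiniteMeasure Q] : tvDist (μ.prod P) (μ.prod Q) ≤ tvDist P Q :=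
  tvDist_le_of_forall fun C hC => by
    rw [measureReal_prod_eq_integral μ P hC, measureReal_prod_eq_integral μ Q hC]
    exact abs_integral_sub_integral_le (integrable_measureReal_prodMk μ P hC)
      (integrable_measureReal_prodMk μ Q hC)
      fun x => abs_measureReal_sub_le_tvDist P Q (measurable_prodMk_left hC)

lemma tvDist_prod_le (μ ν : Measure S) (P Q : Measure T) [IsProbabilityMeasure μ]
    [IsProbabilityMeasure ν] [IsProbabilityMeasure P] [IsProbabilityMeasure Q] :
    tvDist (μ.prod P) (ν.prod Q) ≤ tvDist μ ν + tvDist P Q := by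
  have hswap : tvDist (μ.prod Q) (ν.prod Q) ≤ tvDist μ ν := by
    rw [← Measure.prod_swap (μ := Q), ← Measure.prod_swap (μ := Q)]
    exact (tvDist_map_le _ _ measurable_swap).trans (tvDist_prod_left_le Q μ ν)
  calc tvDist (μ.prod P) (ν.prod Q)
      ≤ tvDist (μ.prod P) (μ.prod Q) + tvDist (μ.prod Q) (ν.prod Q) := tvDist_triangle _ _ _
    _ ≤ tvDist P Q + tvDist μ ν := add_le_add (tvDist_prod_left_le μ P Q) hswap
    _ = tvDist μ ν + tvDist P Q := add_comm _ _

lemma tvDist_pi_le (μ ν : Measure S) [IsProbabilityMeasure μ] [IsProbabilityMeasure ν] (n : ℕ) :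
    tvDist (Measure.pi fun _ : Fin n => μ) (Measure.pi fun _ : Fin n => ν) ≤ n * tvDist μ ν := by
  induction n with
  | zero =>
    rw [Measure.pi_of_empty _ isEmptyElim, Measure.pi_of_empty _ isEmptyElim,
      tvDist_self, Nat.cast_zero, zero_mul]
  | succ n ih =>
    have hpi : ∀ ρ : Measure S, [IsProbabilityMeasure ρ] →
        Measure.pi (fun _ : Fin (n + 1) => ρ) =
          (ρ.prod (Measure.pi fun _ : Fin n => ρ)).map
            (MeasurableEquiv.piFinSuccAbove (fun _ => S) 0).symm := fun ρ _ =>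
      (measurePreserving_piFinSuccAbove (fun _ : Fin (n + 1) => ρ) 0).symm.map_eq.symm
    rw [hpi μ, hpi ν]
    calc _ ≤ tvDist (μ.prod (Measure.pi fun _ : Fin n => μ))
            (ν.prod (Measure.pi fun _ : Fin n => ν)) :=
          tvDist_map_le _ _ (MeasurableEquiv.measurable _)
      _ ≤ tvDist μ ν + n * tvDist μ ν := (tvDist_prod_le _ _ _ _).trans (by gcongr)
      _ = (n + 1 : ℕ) * tvDist μ ν := by push_cast; ring

end Product

section Bind

variable {Ω S : Type*} [MeasurableSpace Ω] [MeasurableSpace S]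

lemma measureReal_bind_eq_integral (m : Measure Ω) {k : Ω → Measure S} (hk : Measurable k)
    [∀ ω, IsFiniteMeasure (k ω)] {A : Set S} (hA : MeasurableSet A) :
    (m.bind k).real A = ∫ ω, (k ω).real A ∂m := by
  rw [measureReal_def, Measure.bind_apply hA hk.aemeasurable,
    ← integral_toReal (f := fun ω => k ω A) ((Measure.measurable_coe hA).comp hk).aemeasurable
      (.of_forall fun _ => measure_lt_top _ _)]
  rfl

lemma integrable_measureReal_of_measurable (m : Measure Ω) [IsFiniteMeasure m]
    {k : Ω → Measure S} (hk : Measurable k) [∀ ω, IsProbabilityMeasure (k ω)] {A : Set S}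
    (hA : MeasurableSet A) : Integrable (fun ω => (k ω).real A) m :=
  .of_bound ((Measure.measurable_coe hA).comp hk).ennreal_toReal.aestronglyMeasurable 1
    (.of_forall fun _ => by rw [Real.norm_of_nonneg measureReal_nonneg]; exact measureReal_le_one)

lemma tvDist_bind_le (m : Measure Ω) [IsFiniteMeasure m] {k₁ k₂ : Ω → Measure S}
    (hk₁ : Measurable k₁) (hk₂ : Measurable k₂) [∀ ω, IsProbabilityMeasure (k₁ ω)]
    [∀ ω, IsProbabilityMeasure (k₂ ω)] {c : Ω → ℝ} (hc : Integrable c m)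
    (h : ∀ ω, tvDist (k₁ ω) (k₂ ω) ≤ c ω) : tvDist (m.bind k₁) (m.bind k₂) ≤ ∫ ω, c ω ∂m := by
  refine tvDist_le_of_forall fun A hA => ?_
  have hint₁ := integrable_measureReal_of_measurable m hk₁ hA
  have hint₂ := integrable_measureReal_of_measurable m hk₂ hA
  rw [measureReal_bind_eq_integral m hk₁ hA, measureReal_bind_eq_integral m hk₂ hA,
    ← integral_sub hint₁ hint₂]
  exact abs_integral_le_integral_abs.trans <| integral_mono (hint₁.sub hint₂).abs hc
    fun ω => (abs_measureReal_sub_le_tvDist _ _ hA).trans (h ω)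

end Bind

section RDE

variable {Ω S : Type*} [MeasurableSpace Ω] [MeasurableSpace S] [Nonempty S]

noncomputable def padSeq (n : ℕ) (v : Fin n → S) : ℕ → S :=
  fun i => if h : i < n then v ⟨i, h⟩ else Classical.arbitrary S

noncomputable def rdeLaw (γ : Ω → (ℕ → S) → S) (μ : Measure S) (n : ℕ) (ω : Ω) : Measure S :=
  (Measure.pi fun _ : Fin n => μ).map fun v => γ ω (padSeq n v)

lemma rdeT_eq_bind (r : Measure Ω) (γ : Ω → (ℕ → S) → S) (κ : Ω → ℕ) (μ : Measure S) :
    rdeT r γ κ μ = ((r univ)⁻¹ • r).bind fun ω => rdeLaw γ μ (κ ω) ω :=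
  rfl

lemma measurable_padSeq (n : ℕ) : Measurable (padSeq (S := S) n) :=
  measurable_pi_lambda _ fun i => by
    by_cases h : i < n
    · simpa [padSeq, h] using measurable_pi_apply (⟨i, h⟩ : Fin n)
    · simp [padSeq, h]

variable {γ : Ω → (ℕ → S) → S} {κ : Ω → ℕ}

lemma measurable_rdeLaw (hγ : Measurable (Function.uncurry γ)) (μ : Measure S) [SigmaFinite μ]
    (n : ℕ) : Measurable (rdeLaw γ μ n) := by
  have hf : Measurable fun p : Ω × (Fin n → S) => γ p.1 (padSeq n p.2) :=
    hγ.comp (measurable_fst.prodMk ((measurable_padSeq n).comp measurable_snd))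
  refine Measure.measurable_of_measurable_coe _ fun B hB => ?_
  convert measurable_measure_prodMk_left (ν := Measure.pi fun _ : Fin n => μ) (hf hB) using 1
  funext ω
  exact Measure.map_apply (hf.comp measurable_prodMk_left) hB

lemma measurable_rdeLaw_comp (hγ : Measurable (Function.uncurry γ))
    (hκ : Measurable κ) (μ : Measure S) [SigmaFinite μ] :
    Measurable fun ω => rdeLaw γ μ (κ ω) ω :=
  (measurable_from_prod_countable_left (f := fun p : Ω × ℕ => rdeLaw γ μ p.2 p.1)
    (measurable_rdeLaw hγ μ)).comp (measurable_id.prodMk hκ)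

lemma isProbabilityMeasure_rdeLaw (hγ : Measurable (Function.uncurry γ)) (μ : Measure S)
    [IsProbabilityMeasure μ] (n : ℕ) (ω : Ω) : IsProbabilityMeasure (rdeLaw γ μ n ω) :=
  Measure.isProbabilityMeasure_map (hγ.of_uncurry_left.comp (measurable_padSeq n)).aemeasurable

lemma tvDist_rdeLaw_le (hγ : Measurable (Function.uncurry γ)) (μ ν : Measure S)
    [IsProbabilityMeasure μ] [IsProbabilityMeasure ν] (n : ℕ) (ω : Ω) :
    tvDist (rdeLaw γ μ n ω) (rdeLaw γ ν n ω) ≤ n * tvDist μ ν :=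
  (tvDist_map_le _ _ (hγ.of_uncurry_left.comp (measurable_padSeq n))).trans (tvDist_pi_le μ ν n)

variable {r : Measure Ω}

lemma isProbabilityMeasure_rdeT [IsFiniteMeasure r] (hr : r univ ≠ 0)
    (hγ : Measurable (Function.uncurry γ)) (hκ : Measurable κ) (μ : Measure S) [IsProbabilityMeasure μ] :
    IsProbabilityMeasure (rdeT r γ κ μ) := by
  have : NeZero r := ⟨Measure.measure_univ_ne_zero.1 hr⟩
  rw [rdeT_eq_bind]
  exact isProbabilityMeasure_bind (measurable_rdeLaw_comp hγ hκ μ).aemeasurable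
    (.of_forall fun ω => isProbabilityMeasure_rdeLaw hγ μ (κ ω) ω)

lemma tvDist_rdeT_le (hr : r univ ≠ 0) (hγ : Measurable (Function.uncurry γ))
    (hκ : Measurable κ) (hmom : Integrable (fun ω => (κ ω : ℝ)) r) (μ ν : Measure S)
    [IsProbabilityMeasure μ] [IsProbabilityMeasure ν] :
    tvDist (rdeT r γ κ μ) (rdeT r γ κ ν) ≤
      (r univ).toReal⁻¹ * (∫ ω, (κ ω : ℝ) ∂r) * tvDist μ ν := by
  have := fun ω => isProbabilityMeasure_rdeLaw hγ μ (κ ω) ω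
  have := fun ω => isProbabilityMeasure_rdeLaw hγ ν (κ ω) ω
  rw [rdeT_eq_bind, rdeT_eq_bind]
  calc _ ≤ ∫ ω, (κ ω : ℝ) * tvDist μ ν ∂((r univ)⁻¹ • r) :=
        tvDist_bind_le _ (measurable_rdeLaw_comp hγ hκ μ) (measurable_rdeLaw_comp hγ hκ ν)
          ((hmom.mul_const _).smul_measure (ENNReal.inv_ne_top.2 hr))
          fun ω => tvDist_rdeLaw_le hγ μ ν (κ ω) ω
    _ = _ := by rw [integral_smul_measure, integral_mul_const, ENNReal.toReal_inv, smul_eq_mul,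
      mul_assoc]

end RDE

lemma le_mul_exp_of_le_add_integral {g : ℝ → ℝ} (hg : Continuous g) {C L : ℝ} (hL : 0 ≤ L)
    (h : ∀ t, 0 ≤ t → g t ≤ C + L * ∫ s in (0 : ℝ)..t, g s) {t : ℝ} (ht : 0 ≤ t) :
    g t ≤ C * Real.exp (L * t) := by
  set u : ℝ → ℝ := fun t => C + L * ∫ s in (0 : ℝ)..t, g s
  have hu : ∀ s, HasDerivAt u (L * g s) s := fun s =>
    ((hg.integral_hasStrictDerivAt 0 s).hasDerivAt.const_mul L).const_add C
  have hgron := le_gronwallBound_of_liminf_deriv_right_le (f := u) (δ := C) (ε := 0)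
    (fun s _ => (hu s).continuousAt.continuousWithinAt)
    (fun s _ _ hr => (hu s).hasDerivWithinAt.liminf_right_slope_le hr)
    (by simp [u]) (fun s hs => by simpa using mul_le_mul_of_nonneg_left (h s hs.1) hL)
    t ⟨ht, le_rfl⟩
  rw [gronwallBound_ε0, sub_zero] at hgron
  exact (h t ht).trans hgron

section FlowGronwall

variable {S : Type*} [MeasurableSpace S] {μ ν : ℝ → Measure S}
  (hμ : ∀ t, 0 ≤ t → IsProbabilityMeasure (μ t)) (hν : ∀ t, 0 ≤ t → IsProbabilityMeasure (ν t))
  {D : Set S → ℝ → ℝ} {L : ℝ}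
  (hderiv : ∀ A, MeasurableSet A → ∀ t, 0 ≤ t →
    HasDerivAt (fun s => (μ s).real A - (ν s).real A) (D A t) t)
  (hD : ∀ A, MeasurableSet A → ∀ t, 0 ≤ t → |D A t| ≤ L * tvDist (μ t) (ν t))
include hμ hν hderiv hD

/- The flows are only given for `t ≥ 0`; freezing them at time `0` for `t < 0` turns the distance
into a continuous function on all of `ℝ`, to which the fundamental theorem of calculus applies. -/
lemma continuous_tvDist_max_zero (hL : 0 ≤ L) :
    Continuous fun t => tvDist (μ (max t 0)) (ν (max t 0)) := by
  have hlip : ∀ A, MeasurableSet A → ∀ s, 0 ≤ s → ∀ t, 0 ≤ t →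
      |((μ t).real A - (ν t).real A) - ((μ s).real A - (ν s).real A)| ≤ L * |t - s| :=
    fun A hA s hs t ht => Convex.norm_image_sub_le_of_norm_hasDerivWithin_le
      (fun x hx => (hderiv A hA x hx).hasDerivWithinAt)
      (fun x hx => by
        have := hμ x hx; have := hν x hx
        exact (hD A hA x hx).trans (mul_le_of_le_one_right hL (tvDist_le_one _ _)))
      (convex_Ici 0) hs ht
  refine (LipschitzWith.of_le_add_mul (Real.toNNReal L) fun x y => ?_).continuous
  have := hμ _ (le_max_right y 0); have := hν _ (le_max_right y 0)
  refine tvDist_le_of_forall fun A hA => ?_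
  rw [Real.coe_toNNReal _ hL, Real.dist_eq]
  calc _ ≤ |(μ (max y 0)).real A - (ν (max y 0)).real A|
          + |((μ (max x 0)).real A - (ν (max x 0)).real A)
            - ((μ (max y 0)).real A - (ν (max y 0)).real A)| := by
          linarith [abs_sub_abs_le_abs_sub ((μ (max x 0)).real A - (ν (max x 0)).real A)
            ((μ (max y 0)).real A - (ν (max y 0)).real A)]
    _ ≤ tvDist (μ (max y 0)) (ν (max y 0)) + L * |x - y| :=
        add_le_add (abs_measureReal_sub_le_tvDist _ _ hA) ((hlip A hA _ (le_max_right y 0) _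
          (le_max_right x 0)).trans (mul_le_mul_of_nonneg_left (abs_max_sub_max_le_abs x y 0) hL))

lemma tvDist_le_add_integral (hL : 0 ≤ L) {t : ℝ} (ht : 0 ≤ t) :
    tvDist (μ t) (ν t) ≤
      tvDist (μ 0) (ν 0) + L * ∫ s in (0 : ℝ)..t, tvDist (μ (max s 0)) (ν (max s 0)) := by
  have hg := continuous_tvDist_max_zero hμ hν hderiv hD hL
  have := hμ 0 le_rfl; have := hν 0 le_rfl
  refine tvDist_le_of_forall fun A hA => image_norm_le_of_norm_deriv_right_le_deriv_boundary
    (f := fun s => (μ s).real A - (ν s).real A)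
    (fun s hs => (hderiv A hA s hs.1).continuousAt.continuousWithinAt)
    (fun s hs => (hderiv A hA s hs.1).hasDerivWithinAt)
    (B := fun s => tvDist (μ 0) (ν 0) + L * ∫ s in (0 : ℝ)..s, tvDist (μ (max s 0)) (ν (max s 0)))
    (by simpa using abs_measureReal_sub_le_tvDist _ _ hA)
    (fun s => ((hg.integral_hasStrictDerivAt 0 s).hasDerivAt.const_mul L).const_add _)
    (fun s hs => by rw [max_eq_left hs.1]; exact hD A hA s hs.1) ⟨ht, le_rfl⟩

lemma tvDist_le_exp_mul (hL : 0 ≤ L) {t : ℝ} (ht : 0 ≤ t) :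
    tvDist (μ t) (ν t) ≤ Real.exp (L * t) * tvDist (μ 0) (ν 0) := by
  have key := le_mul_exp_of_le_add_integral (continuous_tvDist_max_zero hμ hν hderiv hD hL) hL
    (fun s hs => by simpa [max_eq_left hs] using tvDist_le_add_integral hμ hν hderiv hD hL hs) ht
  simpa [max_eq_left ht, mul_comm] using key

end FlowGronwall

section MeanField

variable {Ω S : Type*} [MeasurableSpace Ω] [MeasurableSpace S] [Nonempty S]
  {r : Measure Ω} {γ : Ω → (ℕ → S) → S} {κ : Ω → ℕ}

lemma SolvesMeanField.hasDerivAt_measureReal {μ : ℝ → Measure S}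
    (hμ : SolvesMeanField r γ κ μ) {A : Set S} (hA : MeasurableSet A) {t : ℝ} (ht : 0 ≤ t) :
    HasDerivAt (fun s => (μ s).real A)
      ((r univ).toReal * ((rdeT r γ κ (μ t)).real A - (μ t).real A)) t := by
  have hbdd : ∀ x, |A.indicator (1 : S → ℝ) x| ≤ 1 := fun x => by
    by_cases hx : x ∈ A <;> simp [hx]
  simpa only [integral_indicator_one hA] using
    hμ.2 (A.indicator 1) (measurable_one.indicator hA) ⟨1, hbdd⟩ t ht

lemma abs_meanFieldDrift_sub_le [IsFiniteMeasure r] (hr : r univ ≠ 0)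
    (hγ : Measurable (Function.uncurry γ)) (hκ : Measurable κ)
    (hmom : Integrable (fun ω => (κ ω : ℝ)) r) (μ ν : Measure S) [IsProbabilityMeasure μ]
    [IsProbabilityMeasure ν] {A : Set S} (hA : MeasurableSet A) :
    |(r univ).toReal * ((rdeT r γ κ μ).real A - μ.real A)
        - (r univ).toReal * ((rdeT r γ κ ν).real A - ν.real A)|
      ≤ (∫ ω, ((κ ω : ℝ) + 1) ∂r) * tvDist μ ν := by
  have := isProbabilityMeasure_rdeT hr hγ hκ μ
  have := isProbabilityMeasure_rdeT hr hγ hκ ν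
  set R := (r univ).toReal
  set K := ∫ ω, (κ ω : ℝ) ∂r
  have hR : 0 < R := ENNReal.toReal_pos hr (measure_ne_top _ _)
  have hL : ∫ ω, ((κ ω : ℝ) + 1) ∂r = K + R := by
    rw [integral_add hmom (integrable_const 1), integral_const, smul_eq_mul, mul_one,
      measureReal_def]
  have hT : |(rdeT r γ κ μ).real A - (rdeT r γ κ ν).real A| ≤ R⁻¹ * K * tvDist μ ν :=
    (abs_measureReal_sub_le_tvDist _ _ hA).trans (tvDist_rdeT_le hr hγ hκ hmom μ ν)
  calc _ = R * |((rdeT r γ κ μ).real A - (rdeT r γ κ ν).real A) - (μ.real A - ν.real A)| := by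
        rw [← mul_sub, abs_mul, abs_of_pos hR]; ring_nf
    _ ≤ R * (R⁻¹ * K * tvDist μ ν + tvDist μ ν) :=
        mul_le_mul_of_nonneg_left ((abs_sub _ _).trans
          (add_le_add hT (abs_measureReal_sub_le_tvDist _ _ hA))) hR.le
    _ = _ := by rw [hL]; field_simp

end MeanField

theorem stmt5_general {Ω S : Type*} [MeasurableSpace Ω] [MeasurableSpace S] [Nonempty S]
    (r : Measure Ω) [IsFiniteMeasure r] (hr : r Set.univ ≠ 0)
    (γ : Ω → (ℕ → S) → S) (hγ : Measurable (Function.uncurry γ))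
    (κ : Ω → ℕ) (hκ : Measurable κ)
    (hmom : Integrable (fun ω => (κ ω : ℝ)) r)
    (μ ν : ℝ → Measure S)
    (hμ : SolvesMeanField r γ κ μ) (hν : SolvesMeanField r γ κ ν) :
    (∀ t : ℝ, 0 ≤ t →
      tvDist (μ t) (ν t) ≤
        Real.exp ((∫ ω, ((κ ω : ℝ) + 1) ∂r) * t) * tvDist (μ 0) (ν 0)) ∧
    (μ 0 = ν 0 → ∀ t : ℝ, 0 ≤ t → μ t = ν t) := by
  have hL : 0 ≤ ∫ ω, ((κ ω : ℝ) + 1) ∂r := integral_nonneg fun ω => by positivity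
  have hstab : ∀ t : ℝ, 0 ≤ t →
      tvDist (μ t) (ν t) ≤ Real.exp ((∫ ω, ((κ ω : ℝ) + 1) ∂r) * t) * tvDist (μ 0) (ν 0) :=
    fun t ht => tvDist_le_exp_mul hμ.1 hν.1
      (fun A hA s hs => (hμ.hasDerivAt_measureReal hA hs).sub (hν.hasDerivAt_measureReal hA hs))
      (fun A hA s hs => by
        have := hμ.1 s hs; have := hν.1 s hs
        exact abs_meanFieldDrift_sub_le hr hγ hκ hmom (μ s) (ν s) hA) hL ht
  refine ⟨hstab, fun h0 t ht => ?_⟩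
  have := hμ.1 t ht; have := hν.1 t ht; have := hν.1 0 le_rfl
  refine tvDist_eq_zero_iff.1 (le_antisymm ?_ (tvDist_nonneg _ _))
  simpa [h0] using hstab t ht

/-- Uniqueness/Gronwall estimate for the mean-field equation: any two solutions satisfy
`‖μ_t - ν_t‖ ≤ e^{Lt} ‖μ_0 - ν_0‖` with `L = ∫ (κ(ω)+1) r(dω)`; in particular solutions
are unique given the initial state. -/
theorem stmt5 {Ω S : Type*} [MeasurableSpace Ω] [MeasurableSpace S] [Nonempty S]
    (r : Measure Ω) [IsFiniteMeasure r] (hr : r Set.univ ≠ 0)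
    (γ : Ω → (ℕ → S) → S) (hγ : Measurable (Function.uncurry γ))
    (κ : Ω → ℕ) (hκ : Measurable κ)
    (hdep : ∀ ω, ∀ x y : ℕ → S, (∀ i < κ ω, x i = y i) → γ ω x = γ ω y)
    (hmom : Integrable (fun ω => (κ ω : ℝ)) r)
    (μ ν : ℝ → Measure S)
    (hμ : SolvesMeanField r γ κ μ) (hν : SolvesMeanField r γ κ ν) :
    (∀ t : ℝ, 0 ≤ t →
      tvDist (μ t) (ν t) ≤
        Real.exp ((∫ ω, ((κ ω : ℝ) + 1) ∂r) * t) * tvDist (μ 0) (ν 0)) ∧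
    (μ 0 = ν 0 → ∀ t : ℝ, 0 ≤ t → μ t = ν t) :=
  stmt5_general r hr γ hγ κ hκ hmom μ ν hμ hν
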